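/- arXiv:2509.20463 — 4 statements merged into one kernel-verified Lean document; each statement's English description precedes it below -/
import Mathlib

section
/- Let Z, R, R' be countable types equipped with the discrete (⊤) measurable space, n a natural number and ε ≥ 0. If A : (Fin n → Z) → PMF R satisfies, for every pair of neighboring inputs s, s', klDiv((A s).toMeasure, (A s').toMeasure) ≤ ENNReal.ofReal (2·ε²), and f : R → PMF R' is any post-processing map, then for every pair of neighboring inputs s, s' one has klDiv((((A s).bind f)).toMeasure, (((A s').bind f)).toMeasure) ≤ ENNReal.ofReal (2·ε²); that is, KL-stability is preserved under post-processing. -/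
open MeasureTheory ENNReal
open scoped Classical

/-- Two inputs are neighboring if they differ in exactly one coordinate. -/
def Neighboring {Z : Type*} {n : ℕ} (s s' : Fin n → Z) : Prop :=
  ∃ i : Fin n, (∀ j : Fin n, j ≠ i → s j = s' j) ∧ s i ≠ s' i

/-- Kullback–Leibler divergence between two measures. -/
noncomputable def klDiv {α : Type*} [MeasurableSpace α] (μ ν : Measure α) : ℝ≥0∞ :=
  if μ ≪ ν ∧ Integrable (llr μ ν) μ then ENNReal.ofReal (∫ x, llr μ ν x ∂μ) else ⊤

section Helpers
variable {α : Type*} [Countable α] [MeasurableSpace α]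

/-- pointwise AC implies measure AC for PMFs on countable spaces -/
lemma pmf_ac (hms : ∀ s : Set α, MeasurableSet s) {p q : PMF α}
    (h : ∀ x, q x = 0 → p x = 0) : p.toMeasure ≪ q.toMeasure := by
  intro s hs
  have hsc : s.Countable := Set.to_countable s
  have hcover : s = ⋃ x ∈ s, {x} := by simp
  have hq : ∀ x ∈ s, q.toMeasure {x} = 0 := by
    intro x hx
    exact measure_mono_null (Set.singleton_subset_iff.2 hx) hs
  have hp : ∀ x ∈ s, p.toMeasure {x} = 0 := by
    intro x hx
    have h0 := hq x hx
    rw [PMF.toMeasure_apply_singleton _ _ (hms _)] at h0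
    rw [PMF.toMeasure_apply_singleton _ _ (hms _)]
    exact h x h0
  calc p.toMeasure s = p.toMeasure (⋃ x ∈ s, {x}) := by rw [← hcover]
    _ = 0 := by
        refine measure_biUnion_null_iff hsc |>.2 hp

/-- measure AC gives pointwise AC -/
lemma pmf_ac_pt (hms : ∀ s : Set α, MeasurableSet s) {p q : PMF α}
    (h : p.toMeasure ≪ q.toMeasure) : ∀ x, q x = 0 → p x = 0 := by
  intro x hx
  have : q.toMeasure {x} = 0 := by rw [PMF.toMeasure_apply_singleton _ _ (hms _)]; exact hx
  have := h this
  rwa [PMF.toMeasure_apply_singleton _ _ (hms _)] at this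

/-- the llr of PMFs equals log of ratio wherever p is nonzero -/
lemma pmf_llr (hms : ∀ s : Set α, MeasurableSet s) {p q : PMF α}
    (h : ∀ x, q x = 0 → p x = 0) :
    ∀ x, p x ≠ 0 → llr p.toMeasure q.toMeasure x
      = Real.log ((p x).toReal / (q x).toReal) := by
  haveI : MeasurableSingletonClass α := ⟨fun _ => hms _⟩
  set g : α → ℝ≥0∞ := fun x => p x / q x with hg
  have hwd : q.toMeasure.withDensity g = p.toMeasure := by
    refine MeasureTheory.Measure.ext_of_singleton fun x => ?_
    rw [withDensity_apply _ (hms _), lintegral_singleton,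
      PMF.toMeasure_apply_singleton _ _ (hms _), PMF.toMeasure_apply_singleton _ _ (hms _)]
    by_cases hq : q x = 0
    · simp [hg, hq, h x hq]
    · exact ENNReal.div_mul_cancel hq (q.apply_ne_top x)
  have hrn : g =ᵐ[q.toMeasure] p.toMeasure.rnDeriv q.toMeasure := by
    refine MeasureTheory.Measure.eq_rnDeriv (fun s _ => hms _)
      MeasureTheory.Measure.MutuallySingular.zero_left ?_
    rw [zero_add, hwd]
  have hae : ∀ x, p x ≠ 0 → g x = p.toMeasure.rnDeriv q.toMeasure x := by
    intro x hx
    by_contra hne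
    have hnull : q.toMeasure {y | ¬ (g y = p.toMeasure.rnDeriv q.toMeasure y)} = 0 := hrn
    have h1 : q.toMeasure {x} = 0 :=
      measure_mono_null (Set.singleton_subset_iff.2 hne) hnull
    rw [PMF.toMeasure_apply_singleton _ _ (hms _)] at h1
    exact hx (h x h1)
  intro x hx
  rw [llr, ← hae x hx, hg]
  simp [ENNReal.toReal_div]

lemma pmf_integrable_iff (hms : ∀ s : Set α, MeasurableSet s) (p : PMF α) (g : α → ℝ) :
    Integrable g p.toMeasure ↔ Summable (fun x => (p x).toReal * |g x|) := by
  haveI : MeasurableSingletonClass α := ⟨fun _ => hms _⟩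
  have hmeas : AEStronglyMeasurable g p.toMeasure :=
    (Measurable.aestronglyMeasurable (fun s _ => hms _))
  have hlint : ∫⁻ x, ‖g x‖ₑ ∂p.toMeasure = ∑' x, ENNReal.ofReal ((p x).toReal * |g x|) := by
    rw [lintegral_countable']
    refine tsum_congr fun x => ?_
    rw [PMF.toMeasure_apply_singleton _ _ (hms _)]
    rw [ENNReal.ofReal_mul ENNReal.toReal_nonneg, ENNReal.ofReal_toReal (p.apply_ne_top x)]
    rw [mul_comm]
    congr 1
    simp [Real.enorm_eq_ofReal_abs]
  constructor
  · intro hint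
    have hfin := hint.2
    simp only [HasFiniteIntegral] at hfin
    rw [hlint] at hfin
    have := ENNReal.summable_toReal hfin.ne
    refine this.congr fun x => ?_
    rw [ENNReal.toReal_ofReal (by positivity)]
  · intro hsum
    refine ⟨hmeas, ?_⟩
    simp only [HasFiniteIntegral]
    rw [hlint,
      ← ENNReal.ofReal_tsum_of_nonneg (fun x => by positivity) hsum]
    exact ENNReal.ofReal_lt_top

lemma pmf_integral_eq (hms : ∀ s : Set α, MeasurableSet s) (p : PMF α) (g : α → ℝ)
    (hint : Integrable g p.toMeasure) :
    ∫ x, g x ∂p.toMeasure = ∑' x, (p x).toReal * g x := by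
  haveI : MeasurableSingletonClass α := ⟨fun _ => hms _⟩
  rw [integral_countable' hint]
  refine tsum_congr fun x => ?_
  rw [measureReal_def, PMF.toMeasure_apply_singleton _ _ (hms _), smul_eq_mul]

lemma pmf_real_summable (p : PMF α) : Summable (fun x => (p x).toReal) :=
  ENNReal.summable_toReal (by rw [p.tsum_coe]; exact one_ne_top)

lemma pmf_real_tsum (p : PMF α) : ∑' x, (p x).toReal = 1 := by
  rw [← ENNReal.tsum_toReal_eq (fun x => p.apply_ne_top x), p.tsum_coe, ENNReal.toReal_one]

end Helpers

section RealLemmas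

/-- If `v = 0 → u = 0`, then `u - v ≤ u * log (u / v)` for nonneg u, v. -/
lemma sub_le_mul_log {u v : ℝ} (hu : 0 ≤ u) (hv : 0 ≤ v) (hac : v = 0 → u = 0) :
    u - v ≤ u * Real.log (u / v) := by
  rcases eq_or_lt_of_le hu with h0 | hupos
  · simp [← h0]; exact hv
  rcases eq_or_lt_of_le hv with h0 | hvpos
  · exact absurd (hac h0.symm) (ne_of_gt hupos)
  have h := Real.log_le_sub_one_of_pos (show (0:ℝ) < v / u by positivity)
  have hneg : Real.log (u / v) = - Real.log (v / u) := by
    rw [← Real.log_inv]; congr 1; field_simp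
  have h2 : u * Real.log (v/u) ≤ u * (v/u - 1) := mul_le_mul_of_nonneg_left h hupos.le
  have h3 : u * (v/u - 1) = v - u := by field_simp
  rw [hneg]; linarith

/-- tangent-line bound: `u * log c + (u - c * v) ≤ u * log (u / v)`. -/
lemma tangent_le_mul_log {u v c : ℝ} (hu : 0 ≤ u) (hv : 0 ≤ v) (hc : 0 < c)
    (hac : v = 0 → u = 0) :
    u * Real.log c + (u - c * v) ≤ u * Real.log (u / v) := by
  rcases eq_or_lt_of_le hu with h0 | hupos
  · simp [← h0]; positivity
  rcases eq_or_lt_of_le hv with h0 | hvpos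
  · exact absurd (hac h0.symm) (ne_of_gt hupos)
  have key : u - c * v ≤ u * Real.log (u / (c * v)) := by
    have := sub_le_mul_log hupos.le (show (0:ℝ) ≤ c * v by positivity)
      (fun h => absurd h (by positivity))
    exact this
  have hlog : Real.log (u / (c * v)) = Real.log (u / v) - Real.log c := by
    rw [div_mul_eq_div_div_swap, Real.log_div (by positivity) (ne_of_gt hc)]
  nlinarith [key, hlog, hupos]

/-- countable log-sum inequality -/
lemma log_sum_ineq {ι : Type*} [Countable ι] (u v : ι → ℝ)
    (hu : ∀ i, 0 ≤ u i) (hv : ∀ i, 0 ≤ v i) (hsu : Summable u) (hsv : Summable v)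
    (hac : ∀ i, v i = 0 → u i = 0)
    (hsl : Summable (fun i => u i * Real.log (u i / v i))) :
    (∑' i, u i) * Real.log ((∑' i, u i) / (∑' i, v i)) ≤ ∑' i, u i * Real.log (u i / v i) := by
  set U := ∑' i, u i with hU
  set V := ∑' i, v i with hV
  have hU0 : 0 ≤ U := tsum_nonneg hu
  have hV0 : 0 ≤ V := tsum_nonneg hv
  rcases eq_or_lt_of_le hU0 with h0 | hUpos
  · have hui : ∀ i, u i = 0 := fun i =>
      le_antisymm ((Summable.le_tsum hsu i (fun j _ => hu j)).trans h0.symm.le) (hu i)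
    rw [← h0]
    have : ∀ i, u i * Real.log (u i / v i) = 0 := fun i => by rw [hui i]; ring
    rw [tsum_congr this, tsum_zero]
    simp
  have hVpos : 0 < V := by
    rcases eq_or_lt_of_le hV0 with h0 | h
    · exfalso
      have hvi : ∀ i, v i = 0 := by
        intro i
        have := Summable.le_tsum hsv i (fun j _ => hv j)
        linarith [hv i]
      have : U = 0 := by
        rw [hU]
        have : ∀ i, u i = 0 := fun i => hac i (hvi i)
        rw [tsum_congr this, tsum_zero]
      linarith
    · exact h
  set c := U / V with hc
  have hcpos : 0 < c := by positivity
  have key : ∀ i, u i * Real.log c + (u i - c * v i) ≤ u i * Real.log (u i / v i) :=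
    fun i => tangent_le_mul_log (hu i) (hv i) hcpos (hac i)
  have hsum_lhs : Summable (fun i => u i * Real.log c + (u i - c * v i)) := by
    apply Summable.add (hsu.mul_right _)
    exact hsu.sub (hsv.mul_left c)
  have := Summable.tsum_le_tsum key hsum_lhs hsl
  have heval : ∑' i, (u i * Real.log c + (u i - c * v i)) = U * Real.log c + (U - c * V) := by
    rw [Summable.tsum_add (hsu.mul_right _) (hsu.sub (hsv.mul_left c)),
      tsum_mul_right, Summable.tsum_sub hsu (hsv.mul_left c), tsum_mul_left]
  rw [heval] at this
  have hcV : c * V = U := by rw [hc, div_mul_cancel₀ U hVpos.ne']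
  calc U * Real.log (U / V) = U * Real.log c + (U - c * V) := by rw [hcV]; ring
    _ ≤ _ := this

end RealLemmas

section Core

/-- data processing inequality for discrete KL divergence -/
lemma kl_bind_le {R R' : Type*} [Countable R] [Countable R']
    [MeasurableSpace R] [MeasurableSpace R']
    (hmsR : ∀ s : Set R, MeasurableSet s) (hmsR' : ∀ s : Set R', MeasurableSet s)
    (μ ν : PMF R) (f : R → PMF R') :
    klDiv (μ.bind f).toMeasure (ν.bind f).toMeasure ≤ klDiv μ.toMeasure ν.toMeasure := by
  by_cases hKL : μ.toMeasure ≪ ν.toMeasure ∧ Integrable (llr μ.toMeasure ν.toMeasure) μ.toMeasure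
  case neg =>
    have h : klDiv μ.toMeasure ν.toMeasure = ⊤ := by rw [klDiv, if_neg hKL]
    rw [h]
    exact le_top
  obtain ⟨hACm, hInt⟩ := hKL
  -- real valued masses
  set a : R → ℝ := fun r => (μ r).toReal with ha
  set b : R → ℝ := fun r => (ν r).toReal with hb
  set k : R → R' → ℝ := fun r r' => (f r r').toReal with hk
  set L : R → ℝ := fun r => Real.log (a r / b r) with hL
  set M : R' → ℝ := fun r' => ((μ.bind f) r').toReal with hM
  set N : R' → ℝ := fun r' => ((ν.bind f) r').toReal with hN
  have ha0 : ∀ r, 0 ≤ a r := fun r => ENNReal.toReal_nonneg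
  have hb0 : ∀ r, 0 ≤ b r := fun r => ENNReal.toReal_nonneg
  have hk0 : ∀ r r', 0 ≤ k r r' := fun r r' => ENNReal.toReal_nonneg
  have hM0 : ∀ r', 0 ≤ M r' := fun r' => ENNReal.toReal_nonneg
  have hN0 : ∀ r', 0 ≤ N r' := fun r' => ENNReal.toReal_nonneg
  -- pointwise absolute continuity
  have hacpt : ∀ r, ν r = 0 → μ r = 0 := pmf_ac_pt hmsR hACm
  have hacR : ∀ r, b r = 0 → a r = 0 := by
    intro r hbr
    have : ν r = 0 := by
      rcases (ENNReal.toReal_eq_zero_iff _).1 hbr with h | h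
      · exact h
      · exact absurd h (ν.apply_ne_top r)
    have hμ := hacpt r this
    simp only [ha, hμ, ENNReal.toReal_zero]
  have hane : ∀ r, a r ≠ 0 → μ r ≠ 0 := by
    intro r har hc
    exact har (by rw [ha]; simp [hc])
  -- bind pointwise AC
  have hacbind : ∀ r', (ν.bind f) r' = 0 → (μ.bind f) r' = 0 := by
    intro r' h0
    rw [PMF.bind_apply] at h0 ⊢
    rw [ENNReal.tsum_eq_zero] at h0 ⊢
    intro r
    by_cases hμr : μ r = 0
    · rw [hμr, zero_mul]
    · have hνr : ν r ≠ 0 := fun hc => hμr (hacpt r hc)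
      have := h0 r
      rcases mul_eq_zero.1 this with h | h
      · exact absurd h hνr
      · rw [h, mul_zero]
  have hacMN : ∀ r', N r' = 0 → M r' = 0 := by
    intro r' h0
    have : (ν.bind f) r' = 0 := by
      rcases (ENNReal.toReal_eq_zero_iff _).1 h0 with h | h
      · exact h
      · exact absurd h ((ν.bind f).apply_ne_top r')
    have hμ := hacbind r' this
    simp only [hM, hμ, ENNReal.toReal_zero]
  -- llr formulas
  have hllr : ∀ r, a r ≠ 0 → llr μ.toMeasure ν.toMeasure r = L r :=
    fun r har => pmf_llr hmsR hacpt r (hane r har)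
  -- summability of a * |L|
  have hIntSumm := (pmf_integrable_iff hmsR μ (llr μ.toMeasure ν.toMeasure)).1 hInt
  have hAL : Summable (fun r => a r * |L r|) := by
    refine hIntSumm.congr fun r => ?_
    by_cases har : a r = 0
    · simp only [ha] at har ⊢
      rw [har, zero_mul, zero_mul]
    · rw [hllr r har]
  -- integral value
  have hIntval : ∫ x, llr μ.toMeasure ν.toMeasure x ∂μ.toMeasure = ∑' r, a r * L r := by
    rw [pmf_integral_eq hmsR μ _ hInt]
    refine tsum_congr fun r => ?_
    by_cases har : a r = 0
    · simp only [ha] at har ⊢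
      rw [har, zero_mul, zero_mul]
    · rw [hllr r har]
  -- summability of masses
  have hasum : Summable a := pmf_real_summable μ
  have hksum : ∀ r, Summable (k r) := fun r => pmf_real_summable (f r)
  have hktsum : ∀ r, ∑' r', k r r' = 1 := fun r => pmf_real_tsum (f r)
  have hk1 : ∀ r r', k r r' ≤ 1 := by
    intro r r'
    rw [hk]
    exact ENNReal.toReal_le_of_le_ofReal one_pos.le (by simpa using (f r).coe_le_one r')
  have hMsum : Summable M := pmf_real_summable (μ.bind f)
  have hNsum : Summable N := pmf_real_summable (ν.bind f)
  -- bind mass formulas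
  have hMf : ∀ r', M r' = ∑' r, a r * k r r' := by
    intro r'
    rw [hM]
    simp only [PMF.bind_apply]
    rw [ENNReal.tsum_toReal_eq (fun r => ENNReal.mul_ne_top (μ.apply_ne_top r)
      ((f r).apply_ne_top r'))]
    exact tsum_congr fun r => ENNReal.toReal_mul
  have hNf : ∀ r', N r' = ∑' r, b r * k r r' := by
    intro r'
    rw [hN]
    simp only [PMF.bind_apply]
    rw [ENNReal.tsum_toReal_eq (fun r => ENNReal.mul_ne_top (ν.apply_ne_top r)
      ((f r).apply_ne_top r'))]
    exact tsum_congr fun r => ENNReal.toReal_mul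
  have hu_sum : ∀ r', Summable (fun r => a r * k r r') := by
    intro r'
    refine Summable.of_nonneg_of_le (fun r => by positivity)
      (fun r => mul_le_of_le_one_right (ha0 r) (hk1 r r')) hasum
  have hv_sum : ∀ r', Summable (fun r => b r * k r r') := by
    intro r'
    refine Summable.of_nonneg_of_le (fun r => by positivity)
      (fun r => mul_le_of_le_one_right (hb0 r) (hk1 r r')) (pmf_real_summable ν)
  -- the transported function
  set S : R → R' → ℝ := fun r r' => (a r * L r) * k r r' with hS
  have hSabs : ∀ r r', |S r r'| = (a r * |L r|) * k r r' := by
    intro r r'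
    rw [hS]
    rw [abs_mul, abs_mul, abs_of_nonneg (ha0 r), abs_of_nonneg (hk0 r r')]
  have hSabs_r : ∀ r, Summable (fun r' => |S r r'|) := by
    intro r
    refine Summable.congr ((hksum r).mul_left (a r * |L r|)) fun r' => (hSabs r r').symm
  have hSabs_tsum : ∀ r, ∑' r', |S r r'| = a r * |L r| := by
    intro r
    rw [tsum_congr (fun r' => hSabs r r'), tsum_mul_left, hktsum r, mul_one]
  have hprod : Summable (fun p : R × R' => |S p.1 p.2|) := by
    refine (summable_prod_of_nonneg (fun p => abs_nonneg _)).2 ⟨fun r => hSabs_r r, ?_⟩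
    refine hAL.congr fun r => ?_
    rw [hSabs_tsum r]
  have hSprod : Summable (fun p : R × R' => S p.1 p.2) := by
    refine Summable.of_abs hprod
  have hprod_swap : Summable (fun p : R' × R => |S p.2 p.1|) :=
    (Equiv.prodComm R' R).summable_iff.2 hprod
  have hU_r' : ∀ r', Summable (fun r => |S r r'|) := by
    intro r'
    have := ((summable_prod_of_nonneg (fun p : R' × R => abs_nonneg (S p.2 p.1))).1
      hprod_swap).1 r'
    exact this
  set U : R' → ℝ := fun r' => ∑' r, |S r r'| with hUdef
  have hU0 : ∀ r', 0 ≤ U r' := fun r' => tsum_nonneg (fun r => abs_nonneg _)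
  have hUsum : Summable U :=
    ((summable_prod_of_nonneg (fun p : R' × R => abs_nonneg (S p.2 p.1))).1 hprod_swap).2
  have hT_r' : ∀ r', Summable (fun r => S r r') := fun r' => (hU_r' r').of_abs
  set T : R' → ℝ := fun r' => ∑' r, S r r' with hTdef
  have hTle : ∀ r', |T r'| ≤ U r' := by
    intro r'
    have := norm_tsum_le_tsum_norm (f := fun r => S r r') (by simpa using hU_r' r')
    simpa using this
  have hTsum : Summable T := by
    refine Summable.of_norm_bounded hUsum fun r' => ?_
    simpa using hTle r'
  -- total sum of T
  have hTtotal : ∑' r', T r' = ∑' r, a r * L r := by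
    rw [hTdef]
    have hcomm := Summable.tsum_comm (f := S) (Summable.congr hSprod (fun p => rfl) : _)
    rw [hcomm]
    refine tsum_congr fun r => ?_
    rw [tsum_mul_left, hktsum r, mul_one]
  -- pointwise log-sum inequality
  set v : R' → ℝ := fun r' => M r' * Real.log (M r' / N r') with hvdef
  have hv_le_T : ∀ r', v r' ≤ T r' := by
    intro r'
    have hcongr : ∀ r, (a r * k r r') * Real.log ((a r * k r r') / (b r * k r r'))
        = S r r' := by
      intro r
      show (a r * k r r') * Real.log ((a r * k r r') / (b r * k r r')) = (a r * L r) * k r r'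
      by_cases hkr : k r r' = 0
      · simp [hkr]
      by_cases hbr : b r = 0
      · have har : a r = 0 := hacR r hbr
        simp [har]
      have hq : (a r * k r r') / (b r * k r r') = a r / b r :=
        mul_div_mul_right _ _ hkr
      rw [hq]
      simp only [hL]
      ring
    have hsl : Summable (fun r => (a r * k r r') * Real.log ((a r * k r r') / (b r * k r r'))) :=
      Summable.congr (hT_r' r') (fun r => (hcongr r).symm)
    have key := log_sum_ineq (fun r => a r * k r r') (fun r => b r * k r r')
      (fun r => by positivity) (fun r => by positivity) (hu_sum r') (hv_sum r')
      (fun r h => by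
        have h' : b r * k r r' = 0 := h
        show a r * k r r' = 0
        rcases mul_eq_zero.1 h' with h2 | h2
        · rw [hacR r h2, zero_mul]
        · rw [h2, mul_zero]) hsl
    show M r' * Real.log (M r' / N r') ≤ T r'
    rw [hMf r', hNf r']
    calc (∑' r, a r * k r r') * Real.log ((∑' r, a r * k r r') / (∑' r, b r * k r r'))
        ≤ ∑' r, (a r * k r r') * Real.log ((a r * k r r') / (b r * k r r')) := key
      _ = T r' := by rw [hTdef]; exact tsum_congr hcongr
  have hv_lb : ∀ r', M r' - N r' ≤ v r' :=
    fun r' => sub_le_mul_log (hM0 r') (hN0 r') (hacMN r')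
  have hvabs : ∀ r', |v r'| ≤ U r' + (M r' + N r') := by
    intro r'
    rw [abs_le]
    constructor
    · have := hv_lb r'
      have h2 : -(M r' + N r') ≤ M r' - N r' := by linarith [hM0 r', hN0 r']
      linarith [hU0 r']
    · have := (hv_le_T r').trans ((le_abs_self _).trans (hTle r'))
      linarith [hM0 r', hN0 r']
  have hvsum : Summable v := by
    refine Summable.of_norm_bounded
      (hUsum.add (hMsum.add hNsum)) fun r' => ?_
    simpa using hvabs r'
  -- bind kl conditions
  have hACbind : (μ.bind f).toMeasure ≪ (ν.bind f).toMeasure := pmf_ac hmsR' hacbind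
  have hMne : ∀ r', M r' ≠ 0 → (μ.bind f) r' ≠ 0 := by
    intro r' har hc
    exact har (by rw [hM]; simp [hc])
  have hllr' : ∀ r', M r' ≠ 0 →
      llr (μ.bind f).toMeasure (ν.bind f).toMeasure r' = Real.log (M r' / N r') :=
    fun r' hr => pmf_llr hmsR' hacbind r' (hMne r' hr)
  have hvabs_summ : Summable (fun r' => M r' * |Real.log (M r' / N r')|) := by
    refine hvsum.abs.congr fun r' => ?_
    show |M r' * Real.log (M r' / N r')| = _
    rw [abs_mul, abs_of_nonneg (hM0 r')]
  have hIntbind : Integrable (llr (μ.bind f).toMeasure (ν.bind f).toMeasure)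
      (μ.bind f).toMeasure := by
    rw [pmf_integrable_iff hmsR']
    refine hvabs_summ.congr fun r' => ?_
    by_cases har : M r' = 0
    · have h2 : ((μ.bind f) r').toReal = 0 := har
      rw [har, h2, zero_mul, zero_mul]
    · rw [hllr' r' har]
  -- conclude
  rw [klDiv, klDiv, if_pos ⟨hACbind, hIntbind⟩, if_pos ⟨hACm, hInt⟩]
  refine ENNReal.ofReal_le_ofReal ?_
  have hIntvalbind : ∫ x, llr (μ.bind f).toMeasure (ν.bind f).toMeasure x
      ∂(μ.bind f).toMeasure = ∑' r', v r' := by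
    rw [pmf_integral_eq hmsR' _ _ hIntbind]
    refine tsum_congr fun r' => ?_
    by_cases har : M r' = 0
    · have h2 : ((μ.bind f) r').toReal = 0 := har
      rw [h2, zero_mul]
      show (0:ℝ) = M r' * Real.log (M r' / N r')
      rw [har, zero_mul]
    · rw [hllr' r' har]
  rw [hIntvalbind, hIntval]
  calc ∑' r', v r' ≤ ∑' r', T r' := Summable.tsum_le_tsum hv_le_T hvsum hTsum
    _ = ∑' r, a r * L r := hTtotal

end Core

/-- Post-processing preserves ε-KL stability. -/
theorem kl_stable_postprocessing {Z R R' : Type*} [Countable R] [Countable R']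
    [MeasurableSpace R] [MeasurableSpace R'] (hR : ‹MeasurableSpace R› = ⊤)
    (hR' : ‹MeasurableSpace R'› = ⊤) (n : ℕ) (ε : ℝ) (hε : 0 ≤ ε)
    (A : (Fin n → Z) → PMF R)
    (hA : ∀ s s' : Fin n → Z, Neighboring s s' →
      klDiv (A s).toMeasure (A s').toMeasure ≤ ENNReal.ofReal (2 * ε ^ 2))
    (f : R → PMF R') :
    ∀ s s' : Fin n → Z, Neighboring s s' →
      klDiv ((A s).bind f).toMeasure ((A s').bind f).toMeasure ≤ ENNReal.ofReal (2 * ε ^ 2) := by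
  intro s s' hss'
  have hmsR : ∀ u : Set R, MeasurableSet u := by
    intro u
    rw [hR]
    trivial
  have hmsR' : ∀ u : Set R', MeasurableSet u := by
    intro u
    rw [hR']
    trivial
  exact (kl_bind_le hmsR hmsR' (A s) (A s') f).trans (hA s s' hss')
end

section
/- Let Z, R₁, R₂ be types, n₁, n₂ natural numbers, ε ≥ 0 and δ ≥ 0. Suppose A₁ : (Fin n₁ → Z) → PMF R₁ and A₂ : (Fin n₂ → Z) → PMF R₂ are each (ε, δ)-max-KL stable. Define the composed algorithm A on pairs of disjoint databases by A (s₁, s₂) := (A₁ s₁).bind (fun r₁ => (A₂ s₂).map (Prod.mk r₁)), i.e., A runs A₁ on s₁ and A₂ on s₂ independently and outputs the pair of results. Then A is (ε, δ)-max-KL stable, where two pairs (s₁, s₂) and (s₁', s₂') are neighboring if either s₁ = s₁' and s₂, s₂' differ in exactly one coordinate, or s₂ = s₂' and s₁, s₁' differ in exactly one coordinate. -/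
open ENNReal

/-- Two pairs of databases are neighboring if one component is equal and the other
component differs in exactly one coordinate. -/
def PairNeighboring {Z : Type*} {n₁ n₂ : ℕ}
    (p p' : (Fin n₁ → Z) × (Fin n₂ → Z)) : Prop :=
  (p.1 = p'.1 ∧ Neighboring p.2 p'.2) ∨ (p.2 = p'.2 ∧ Neighboring p.1 p'.1)

lemma pmf_outer_le_one {R : Type*} (q : PMF R) (S : Set R) : q.toOuterMeasure S ≤ 1 := by
  rw [PMF.toOuterMeasure_apply]
  calc ∑' x, S.indicator q x ≤ ∑' x, q x :=
        ENNReal.tsum_le_tsum fun x => Set.indicator_le_self _ _ _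
    _ = 1 := q.tsum_coe

lemma key_lemma {R : Type*} (c δ : ℝ≥0∞) (hc : c ≠ ∞) (μ μ' : PMF R)
    (h : ∀ S : Set R, μ.toOuterMeasure S ≤ c * μ'.toOuterMeasure S + δ)
    (g : R → ℝ≥0∞) (hg : ∀ r, g r ≤ 1) :
    ∑' r, μ r * g r ≤ c * ∑' r, μ' r * g r + δ := by
  set E : Set R := {r | c * μ' r < μ r} with hE
  have hsub : ∑' r, (μ r - c * μ' r) ≤ δ := by
    have heq : ∀ r, μ r - c * μ' r = E.indicator (fun r => μ r) r
        - E.indicator (fun r => c * μ' r) r := by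
      intro r
      by_cases hr : r ∈ E
      · simp [Set.indicator_of_mem hr]
      · have : μ r ≤ c * μ' r := not_lt.mp hr
        simp [Set.indicator_of_notMem hr, tsub_eq_zero_of_le this]
    have hle : ∀ r, E.indicator (fun r => c * μ' r) r ≤ E.indicator (fun r => μ r) r := by
      intro r
      by_cases hr : r ∈ E
      · simpa [Set.indicator_of_mem hr] using (le_of_lt hr)
      · simp [Set.indicator_of_notMem hr]
    have hfin : ∑' r, E.indicator (fun r => c * μ' r) r ≠ ∞ := by
      have h1 : ∑' r, E.indicator (fun r => c * μ' r) r ≤ ∑' r, c * μ' r :=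
        ENNReal.tsum_le_tsum fun r => Set.indicator_le_self _ _ _
      have h2 : ∑' r, c * μ' r = c := by rw [ENNReal.tsum_mul_left, μ'.tsum_coe, mul_one]
      exact ne_top_of_le_ne_top hc (h1.trans h2.le)
    have hfinE : ∑' r, E.indicator (fun r => c * μ' r) r ≠ ∞ := hfin
    have hadd : (∑' r, (E.indicator (fun r => μ r) r - E.indicator (fun r => c * μ' r) r))
        + ∑' r, E.indicator (fun r => c * μ' r) r = ∑' r, E.indicator (fun r => μ r) r := by
      rw [← ENNReal.tsum_add]
      exact tsum_congr fun r => tsub_add_cancel_of_le (hle r)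
    have h2 : ∑' r, E.indicator (fun r => c * μ' r) r = c * μ'.toOuterMeasure E := by
      rw [PMF.toOuterMeasure_apply, ← ENNReal.tsum_mul_left]
      refine tsum_congr fun r => ?_
      by_cases hr : r ∈ E <;>
        simp [Set.indicator_of_mem, Set.indicator_of_notMem, hr]
    have h1 : ∑' r, E.indicator (fun r => μ r) r = μ.toOuterMeasure E :=
      (PMF.toOuterMeasure_apply μ E).symm
    rw [tsum_congr heq]
    have hkey : (∑' r, (E.indicator (fun r => μ r) r - E.indicator (fun r => c * μ' r) r))
        + c * μ'.toOuterMeasure E ≤ δ + c * μ'.toOuterMeasure E := by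
      rw [← h2, hadd, h1, h2]
      calc μ.toOuterMeasure E ≤ c * μ'.toOuterMeasure E + δ := h E
        _ = δ + c * μ'.toOuterMeasure E := add_comm _ _
    have hfin2 : c * μ'.toOuterMeasure E ≠ ∞ :=
      ENNReal.mul_ne_top hc (ne_top_of_le_ne_top one_ne_top (pmf_outer_le_one μ' E))
    exact ENNReal.le_of_add_le_add_right hfin2 hkey
  calc ∑' r, μ r * g r
      ≤ ∑' r, ((μ r - c * μ' r) * g r + c * μ' r * g r) := by
        refine ENNReal.tsum_le_tsum fun r => ?_
        calc μ r * g r ≤ (μ r - c * μ' r + c * μ' r) * g r := by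
              gcongr; exact le_tsub_add
          _ = (μ r - c * μ' r) * g r + c * μ' r * g r := by ring
    _ = (∑' r, (μ r - c * μ' r) * g r) + ∑' r, c * μ' r * g r := ENNReal.tsum_add
    _ ≤ (∑' r, (μ r - c * μ' r)) + c * ∑' r, μ' r * g r := by
        gcongr with r
        · exact mul_le_of_le_one_right' (hg r)
        · rw [← ENNReal.tsum_mul_left]
          exact le_of_eq (tsum_congr fun r => by ring)
    _ ≤ δ + c * ∑' r, μ' r * g r := by gcongr
    _ = c * ∑' r, μ' r * g r + δ := add_comm _ _

/-- Composition of (ε, δ)-max-KL stable algorithms applied to disjoint databases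
is (ε, δ)-max-KL stable. -/
theorem maxKL_stable_composition {Z R₁ R₂ : Type*} (n₁ n₂ : ℕ) (ε : ℝ) (δ : ℝ≥0∞)
    (hε : 0 ≤ ε)
    (A₁ : (Fin n₁ → Z) → PMF R₁) (A₂ : (Fin n₂ → Z) → PMF R₂)
    (hA₁ : ∀ s s' : Fin n₁ → Z, Neighboring s s' → ∀ T : Set R₁,
      (A₁ s).toOuterMeasure T ≤ ENNReal.ofReal (Real.exp ε) * (A₁ s').toOuterMeasure T + δ)
    (hA₂ : ∀ s s' : Fin n₂ → Z, Neighboring s s' → ∀ T : Set R₂,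
      (A₂ s).toOuterMeasure T ≤ ENNReal.ofReal (Real.exp ε) * (A₂ s').toOuterMeasure T + δ) :
    ∀ p p' : (Fin n₁ → Z) × (Fin n₂ → Z), PairNeighboring p p' → ∀ T : Set (R₁ × R₂),
      ((A₁ p.1).bind (fun r₁ => (A₂ p.2).map (Prod.mk r₁))).toOuterMeasure T ≤
        ENNReal.ofReal (Real.exp ε) *
          ((A₁ p'.1).bind (fun r₁ => (A₂ p'.2).map (Prod.mk r₁))).toOuterMeasure T + δ := by
  intro p p' hpp T
  set c := ENNReal.ofReal (Real.exp ε) with hc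
  have hcne : c ≠ ∞ := ENNReal.ofReal_ne_top
  rw [PMF.toOuterMeasure_bind_apply, PMF.toOuterMeasure_bind_apply]
  simp only [PMF.toOuterMeasure_map_apply]
  rcases hpp with ⟨h1, h2⟩ | ⟨h1, h2⟩
  · rw [h1]
    calc ∑' r₁, A₁ p'.1 r₁ * (A₂ p.2).toOuterMeasure (Prod.mk r₁ ⁻¹' T)
        ≤ ∑' r₁, A₁ p'.1 r₁ *
            (c * (A₂ p'.2).toOuterMeasure (Prod.mk r₁ ⁻¹' T) + δ) := by
          gcongr with r₁
          exact hA₂ _ _ h2 _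
      _ = ∑' r₁, (c * (A₁ p'.1 r₁ * (A₂ p'.2).toOuterMeasure (Prod.mk r₁ ⁻¹' T))
            + A₁ p'.1 r₁ * δ) := tsum_congr fun r₁ => by ring
      _ = c * (∑' r₁, A₁ p'.1 r₁ * (A₂ p'.2).toOuterMeasure (Prod.mk r₁ ⁻¹' T)) + δ := by
          rw [ENNReal.tsum_add, ENNReal.tsum_mul_left, ENNReal.tsum_mul_right,
            (A₁ p'.1).tsum_coe, one_mul]
  · rw [h1]
    exact key_lemma c δ hcne (A₁ p.1) (A₁ p'.1) (fun S => hA₁ _ _ h2 S)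
      (fun r₁ => (A₂ p'.2).toOuterMeasure (Prod.mk r₁ ⁻¹' T))
      (fun r₁ => pmf_outer_le_one _ _)
end

section
/- Let Z, R₁, R₂ be types, n₁, n₂ natural numbers and ε ≥ 0. Suppose A₁ : (Fin n₁ → Z) → PMF R₁ and A₂ : (Fin n₂ → Z) → PMF R₂ are each ε-TV stable. Define the composed algorithm A on pairs of disjoint databases by A (s₁, s₂) := (A₁ s₁).bind (fun r₁ => (A₂ s₂).map (Prod.mk r₁)). Then A is ε-TV stable, where two pairs (s₁, s₂) and (s₁', s₂') are neighboring if either s₁ = s₁' and s₂, s₂' differ in exactly one coordinate, or s₂ = s₂' and s₁, s₁' differ in exactly one coordinate. -/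
open ENNReal

namespace TVAux

variable {α : Type*}

lemma tsum_toReal_pmf (p : PMF α) : ∑' a, (p a).toReal = 1 := by
  rw [← ENNReal.tsum_toReal_eq (fun a => p.apply_ne_top a), p.tsum_coe, ENNReal.toReal_one]

lemma summable_pmf (p : PMF α) : Summable fun a => (p a).toReal :=
  ENNReal.summable_toReal (by simp [p.tsum_coe])

lemma tsum_mul_toReal (p : PMF α) (g : α → ℝ≥0∞) (hg : ∀ a, g a ≤ 1) :
    (∑' a, p a * g a).toReal = ∑' a, (p a).toReal * (g a).toReal := by
  rw [ENNReal.tsum_toReal_eq (fun a => ENNReal.mul_ne_top (p.apply_ne_top a)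
    (ne_of_lt (lt_of_le_of_lt (hg a) ENNReal.one_lt_top)))]
  exact tsum_congr fun a => ENNReal.toReal_mul

lemma toReal_le_one {x : ℝ≥0∞} (hx : x ≤ 1) : x.toReal ≤ 1 := by
  simpa using ENNReal.toReal_mono one_ne_top hx

lemma summable_mul (p : PMF α) (g : α → ℝ≥0∞) (hg : ∀ a, g a ≤ 1) :
    Summable fun a => (p a).toReal * (g a).toReal := by
  refine Summable.of_nonneg_of_le (fun a => by positivity) (fun a => ?_) (summable_pmf p)
  calc (p a).toReal * (g a).toReal ≤ (p a).toReal * 1 :=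
        mul_le_mul_of_nonneg_left (toReal_le_one (hg a)) ENNReal.toReal_nonneg
    _ = (p a).toReal := mul_one _

/-- one-sided key lemma: integrating a [0,1] function against two PMFs. -/
lemma key (p q : PMF α) (g : α → ℝ≥0∞) (hg : ∀ a, g a ≤ 1) {ε : ℝ}
    (h : ∀ S : Set α, (p.toOuterMeasure S).toReal - (q.toOuterMeasure S).toReal ≤ ε) :
    (∑' a, p a * g a).toReal - (∑' a, q a * g a).toReal ≤ ε := by
  rw [tsum_mul_toReal p g hg, tsum_mul_toReal q g hg]
  set P : α → ℝ := fun a => (p a).toReal with hP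
  set Q : α → ℝ := fun a => (q a).toReal with hQ
  set G : α → ℝ := fun a => (g a).toReal with hG
  have hPs : Summable P := summable_pmf p
  have hQs : Summable Q := summable_pmf q
  have hPGs : Summable fun a => P a * G a := summable_mul p g hg
  have hQGs : Summable fun a => Q a * G a := summable_mul q g hg
  set S : Set α := {a | Q a ≤ P a} with hS
  have hind : Summable (S.indicator fun a => P a - Q a) := (hPs.sub hQs).indicator S
  have hG01 : ∀ a, 0 ≤ G a ∧ G a ≤ 1 := fun a =>
    ⟨ENNReal.toReal_nonneg, toReal_le_one (hg a)⟩
  have step1 : ∑' a, P a * G a - ∑' a, Q a * G a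
      ≤ ∑' a, S.indicator (fun a => P a - Q a) a := by
    rw [← Summable.tsum_sub hPGs hQGs]
    refine Summable.tsum_le_tsum (fun a => ?_) (hPGs.sub hQGs) hind
    by_cases ha : a ∈ S
    · rw [Set.indicator_of_mem ha]
      calc P a * G a - Q a * G a = (P a - Q a) * G a := (sub_mul _ _ _).symm
        _ ≤ (P a - Q a) * 1 := mul_le_mul_of_nonneg_left (hG01 a).2 (sub_nonneg.2 ha)
        _ = P a - Q a := mul_one _
    · rw [Set.indicator_of_notMem ha]
      have hle : P a - Q a ≤ 0 := sub_nonpos.2 (le_of_not_ge ha)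
      calc P a * G a - Q a * G a = (P a - Q a) * G a := (sub_mul _ _ _).symm
        _ ≤ 0 := mul_nonpos_of_nonpos_of_nonneg hle (hG01 a).1
  have hmeas : ∀ r : PMF α, (r.toOuterMeasure S).toReal
      = ∑' a, S.indicator (fun a => (r a).toReal) a := by
    intro r
    rw [PMF.toOuterMeasure_apply, ENNReal.tsum_toReal_eq]
    · exact tsum_congr fun a => by by_cases ha : a ∈ S <;> simp [ha]
    · intro a; by_cases ha : a ∈ S <;> simp [ha, r.apply_ne_top]
  have step2 : ∑' a, S.indicator (fun a => P a - Q a) a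
      = (p.toOuterMeasure S).toReal - (q.toOuterMeasure S).toReal := by
    rw [hmeas p, hmeas q, ← Summable.tsum_sub (hPs.indicator S) (hQs.indicator S)]
    exact tsum_congr fun a => by by_cases ha : a ∈ S <;> simp [ha]
  calc ∑' a, P a * G a - ∑' a, Q a * G a
      ≤ ∑' a, S.indicator (fun a => P a - Q a) a := step1
    _ = (p.toOuterMeasure S).toReal - (q.toOuterMeasure S).toReal := step2
    _ ≤ ε := h S

/-- second key lemma: same PMF, pointwise-close [0,1] functions. -/
lemma key2 (p : PMF α) (g g' : α → ℝ≥0∞) (hg : ∀ a, g a ≤ 1) (hg' : ∀ a, g' a ≤ 1)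
    {ε : ℝ} (h : ∀ a, |(g a).toReal - (g' a).toReal| ≤ ε) :
    |(∑' a, p a * g a).toReal - (∑' a, p a * g' a).toReal| ≤ ε := by
  rw [tsum_mul_toReal p g hg, tsum_mul_toReal p g' hg']
  set P : α → ℝ := fun a => (p a).toReal with hP
  have hPs : Summable P := summable_pmf p
  have hPGs : Summable fun a => P a * (g a).toReal := summable_mul p g hg
  have hPGs' : Summable fun a => P a * (g' a).toReal := summable_mul p g' hg'
  have habs : Summable fun a => |P a * (g a).toReal - P a * (g' a).toReal| := by
    refine Summable.of_nonneg_of_le (fun a => abs_nonneg _) (fun a => ?_)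
      (hPs.mul_right ε)
    rw [← mul_sub, abs_mul, abs_of_nonneg (ENNReal.toReal_nonneg : (0:ℝ) ≤ (p a).toReal)]
    exact mul_le_mul_of_nonneg_left (h a) ENNReal.toReal_nonneg
  rw [← Summable.tsum_sub hPGs hPGs']
  calc |∑' a, (P a * (g a).toReal - P a * (g' a).toReal)|
      ≤ ∑' a, |P a * (g a).toReal - P a * (g' a).toReal| := by
        simpa using norm_tsum_le_tsum_norm (f := fun a => P a * (g a).toReal - P a * (g' a).toReal)
          (by simpa using habs)
    _ ≤ ∑' a, P a * ε := by
        refine Summable.tsum_le_tsum (fun a => ?_) habs (hPs.mul_right ε)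
        rw [← mul_sub, abs_mul, abs_of_nonneg (ENNReal.toReal_nonneg : (0:ℝ) ≤ (p a).toReal)]
        exact mul_le_mul_of_nonneg_left (h a) ENNReal.toReal_nonneg
    _ = ε := by rw [tsum_mul_right, tsum_toReal_pmf p, one_mul]

lemma meas_le_one (p : PMF α) (s : Set α) : p.toOuterMeasure s ≤ 1 := by
  rw [PMF.toOuterMeasure_apply, ← p.tsum_coe]
  exact Summable.tsum_le_tsum (fun a => Set.indicator_apply_le fun _ => le_rfl)
    ENNReal.summable ENNReal.summable

end TVAux

/-- Composition of ε-TV stable algorithms applied to disjoint databases is ε-TV stable. -/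
theorem tv_stable_composition {Z R₁ R₂ : Type*} (n₁ n₂ : ℕ) (ε : ℝ) (hε : 0 ≤ ε)
    (A₁ : (Fin n₁ → Z) → PMF R₁) (A₂ : (Fin n₂ → Z) → PMF R₂)
    (hA₁ : ∀ s s' : Fin n₁ → Z, Neighboring s s' → ∀ T : Set R₁,
      |((A₁ s).toOuterMeasure T).toReal - ((A₁ s').toOuterMeasure T).toReal| ≤ ε)
    (hA₂ : ∀ s s' : Fin n₂ → Z, Neighboring s s' → ∀ T : Set R₂,
      |((A₂ s).toOuterMeasure T).toReal - ((A₂ s').toOuterMeasure T).toReal| ≤ ε) :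
    ∀ p p' : (Fin n₁ → Z) × (Fin n₂ → Z), PairNeighboring p p' → ∀ T : Set (R₁ × R₂),
      |(((A₁ p.1).bind (fun r₁ => (A₂ p.2).map (Prod.mk r₁))).toOuterMeasure T).toReal -
        (((A₁ p'.1).bind (fun r₁ => (A₂ p'.2).map (Prod.mk r₁))).toOuterMeasure T).toReal| ≤ ε := by
  rintro ⟨s₁, s₂⟩ ⟨s₁', s₂'⟩ (⟨h1, h2⟩ | ⟨h1, h2⟩) T <;>
    simp only at h1 h2 <;>
    simp only [PMF.toOuterMeasure_bind_apply, PMF.toOuterMeasure_map_apply]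
  · -- first components equal, second neighboring
    subst h1
    exact TVAux.key2 (A₁ s₁) _ _
      (fun a => TVAux.meas_le_one _ _) (fun a => TVAux.meas_le_one _ _)
      (fun a => hA₂ s₂ s₂' h2 _)
  · -- second components equal, first neighboring
    subst h1
    rw [abs_sub_le_iff]
    constructor
    · exact TVAux.key (A₁ s₁) (A₁ s₁') _ (fun a => TVAux.meas_le_one _ _)
        (fun S => (abs_le.1 (hA₁ s₁ s₁' h2 S)).2 |> fun h => by linarith [abs_le.1 (hA₁ s₁ s₁' h2 S)])
    · exact TVAux.key (A₁ s₁') (A₁ s₁) _ (fun a => TVAux.meas_le_one _ _)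
        (fun S => by linarith [abs_le.1 (hA₁ s₁ s₁' h2 S)])
end

section
/- Let R be a type, p and q PMFs on R, ε a real number with 0 ≤ ε ≤ 1, and δ ≥ 0 a real number. Suppose that for every set T ⊆ R, (p.toOuterMeasure T).toReal ≤ exp(ε) · (q.toOuterMeasure T).toReal + δ and (q.toOuterMeasure T).toReal ≤ exp(ε) · (p.toOuterMeasure T).toReal + δ. Then for every set T ⊆ R, |(p.toOuterMeasure T).toReal − (q.toOuterMeasure T).toReal| ≤ 2ε + δ; that is, (ε, δ)-max-KL stability implies (2ε + δ)-TV stability for ε ≤ 1. -/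
lemma pmf_om_le_one {R : Type*} (p : PMF R) (T : Set R) : p.toOuterMeasure T ≤ 1 := by
  rw [PMF.toOuterMeasure_apply]
  calc ∑' x, T.indicator p x ≤ ∑' x, p x :=
        ENNReal.tsum_le_tsum fun x => Set.indicator_le_self _ _ _
    _ = 1 := p.tsum_coe

lemma pmf_om_toReal_le_one {R : Type*} (p : PMF R) (T : Set R) :
    (p.toOuterMeasure T).toReal ≤ 1 := by
  have := pmf_om_le_one p T
  simpa using ENNReal.toReal_mono (by simp) this

lemma pmf_om_toReal_nonneg {R : Type*} (p : PMF R) (T : Set R) :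
    0 ≤ (p.toOuterMeasure T).toReal := ENNReal.toReal_nonneg

lemma exp_le_one_add_two_mul {ε : ℝ} (hε0 : 0 ≤ ε) (hε1 : ε ≤ 1) :
    Real.exp ε ≤ 1 + 2 * ε := by
  have hc := convexOn_exp.2 (Set.mem_univ (0:ℝ)) (Set.mem_univ (1:ℝ))
    (by linarith : (0:ℝ) ≤ 1 - ε) hε0 (by ring)
  simp only [smul_eq_mul, mul_zero, mul_one, zero_add, Real.exp_zero] at hc
  have he : Real.exp 1 ≤ 3 := le_of_lt (by
    have := Real.exp_one_lt_d9; linarith)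
  nlinarith [Real.exp_pos (1:ℝ)]

/-- (ε, δ)-max-KL stability implies (2ε + δ)-TV stability for ε ≤ 1. -/
theorem maxKL_implies_tv {R : Type*} (p q : PMF R) (ε δ : ℝ)
    (hε0 : 0 ≤ ε) (hε1 : ε ≤ 1) (hδ : 0 ≤ δ)
    (hpq : ∀ T : Set R, (p.toOuterMeasure T).toReal ≤
      Real.exp ε * (q.toOuterMeasure T).toReal + δ)
    (hqp : ∀ T : Set R, (q.toOuterMeasure T).toReal ≤
      Real.exp ε * (p.toOuterMeasure T).toReal + δ) :
    ∀ T : Set R, |(p.toOuterMeasure T).toReal - (q.toOuterMeasure T).toReal| ≤ 2 * ε + δ := by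
  intro T
  have hexp := exp_le_one_add_two_mul hε0 hε1
  have hp1 := pmf_om_toReal_le_one p T
  have hq1 := pmf_om_toReal_le_one q T
  have hp0 := pmf_om_toReal_nonneg p T
  have hq0 := pmf_om_toReal_nonneg q T
  have h1 := hpq T
  have h2 := hqp T
  rw [abs_le]
  constructor <;> nlinarith
end
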